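/- Let (X,d) be a complete locally compact metric space, μ a nonnegative σ-finite Radon measure on X, and G a topological group acting on X by homeomorphisms preserving μ-nullsets, such that the action is properly discontinuous and free (every point has trivial stabilizer), and there exists a compact K ⊂ X with GK = X. Then there exists a precompact Borel set B ⊂ X with μ(∂B) = 0 such that GB = X and gB ∩ B = ∅ for all g ∈ G with g ≠ 1. -/

import Mathlib

open MeasureTheory Filter Topology Set Pointwise ENNReal

/-- Properly discontinuous action. -/
def ProperlyDisc (G : Type*) (X : Type*) [SMul G X] [TopologicalSpace X] : Prop :=
  ∀ K : Set X, IsCompact K → {g : G | (g • K) ∩ K ≠ ∅}.Finite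

/-!
Freeness and proper discontinuity give every point a ball `U` with compact closure and null
frontier that is disjoint from all its nontrivial translates. Finitely many such balls
`U₀, …, Uₙ` cover `K`, so their translates cover `X`, and
`B = ⋃ i, Uᵢ \ ⋃ j < i, G • Uⱼ` meets every orbit exactly once. The translates of each `Uⱼ`
form a locally finite family, so the frontier of `B` lies in the `G`-orbit of the null set
`⋃ i, ∂Uᵢ`, and it is null because only finitely many translates of that set meet the
compact set `closure B`.
-/

theorem frontier_diff_subset {X : Type*} [TopologicalSpace X] (s t : Set X) :
    frontier (s \ t) ⊆ frontier s ∪ frontier t := by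
  rw [sdiff_eq, ← frontier_compl t]
  exact (frontier_inter_subset s tᶜ).trans (union_subset_union inter_subset_left inter_subset_right)

theorem LocallyFinite.frontier_iUnion_subset {ι X : Type*} [TopologicalSpace X] {f : ι → Set X}
    (hf : LocallyFinite f) : frontier (⋃ i, f i) ⊆ ⋃ i, frontier (f i) := by
  rintro z ⟨hz_cl, hz_int⟩
  rw [hf.closure_iUnion] at hz_cl
  obtain ⟨i, hi⟩ := mem_iUnion.1 hz_cl
  exact mem_iUnion.2 ⟨i, hi, fun h => hz_int (interior_mono (subset_iUnion f i) h)⟩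

theorem ProperlyDisc.properlyDiscontinuousSMul {G X : Type*} [SMul G X] [TopologicalSpace X]
    (h : ProperlyDisc G X) : ProperlyDiscontinuousSMul G X := by
  refine properlyDiscontinuousSMul_iff.2 fun {K L} hK hL => (h _ (hK.union hL)).subset ?_
  rintro g ⟨z, hzK, hzL⟩
  exact nonempty_iff_ne_empty.1
    ⟨z, smul_set_mono subset_union_left hzK, subset_union_right hzL⟩

theorem exists_isOpen_subset_isCompact_closure_null_frontier {X : Type*} [MetricSpace X]
    [LocallyCompactSpace X] [MeasurableSpace X] [OpensMeasurableSpace X] (μ : Measure X)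
    [SFinite μ] {x : X} {s : Set X} (hs : s ∈ 𝓝 x) :
    ∃ U ⊆ s, IsOpen U ∧ x ∈ U ∧ IsCompact (closure U) ∧ μ (frontier U) = 0 := by
  obtain ⟨C, hC, hCs, hCc⟩ := local_compact_nhds hs
  obtain ⟨ε, hε, hεC⟩ := Metric.mem_nhds_iff.1 hC
  obtain ⟨r, ⟨hr, hrε⟩, hr_null⟩ := exists_null_frontier_thickening μ {x} hε
  rw [Metric.thickening_singleton] at hr_null
  have hrC : Metric.ball x r ⊆ C := (Metric.ball_subset_ball hrε.le).trans hεC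
  exact ⟨_, hrC.trans hCs, Metric.isOpen_ball, Metric.mem_ball_self hr,
    hCc.closure_of_subset hrC, hr_null⟩

section Action

variable {G X : Type*} [TopologicalSpace X]

theorem frontier_smul [Group G] [MulAction G X] [ContinuousConstSMul G X] (g : G) (s : Set X) :
    frontier (g • s) = g • frontier s := by
  rw [frontier, closure_smul, interior_smul, ← smul_set_sdiff, frontier]

theorem locallyFinite_smul_of_isCompact_closure [SMul G X] [ProperlyDiscontinuousSMul G X]
    [LocallyCompactSpace X] {s : Set X} (hs : IsCompact (closure s)) :
    LocallyFinite fun g : G => g • s := by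
  intro x
  obtain ⟨C, hCc, hC⟩ := exists_compact_mem_nhds x
  refine ⟨C, hC, (properlyDiscontinuousSMul_iff.1 ‹_› hs hCc).subset ?_⟩
  rintro g ⟨z, hzs, hzC⟩
  exact ⟨z, smul_set_mono subset_closure hzs, hzC⟩

theorem frontier_iUnion_smul_subset [Group G] [MulAction G X] [ContinuousConstSMul G X]
    {s : Set X} (hs : LocallyFinite fun g : G => g • s) :
    frontier (⋃ g : G, g • s) ⊆ ⋃ g : G, g • frontier s := by
  simpa only [frontier_smul] using hs.frontier_iUnion_subset

theorem measure_iUnion_smul_inter_eq_zero [SMul G X] [MeasurableSpace X] {μ : Measure X}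
    (hnull : ∀ (g : G) (N : Set X), μ N = 0 → μ (g • N) = 0) {N C : Set X}
    (hN : LocallyFinite fun g : G => g • N) (hN_null : μ N = 0) (hC : IsCompact C) :
    μ ((⋃ g : G, g • N) ∩ C) = 0 := by
  have hsub : (⋃ g : G, g • N) ∩ C ⊆ ⋃ g ∈ {g : G | (g • N ∩ C).Nonempty}, g • N := by
    rintro z ⟨hz, hzC⟩
    obtain ⟨g, hg⟩ := mem_iUnion.1 hz
    exact mem_biUnion ⟨z, hg, hzC⟩ hg
  refine measure_mono_null hsub ?_
  rw [measure_biUnion_null_iff (hN.finite_nonempty_inter_compact hC).countable]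
  exact fun g _ => hnull g N hN_null

end Action

section FundamentalDomain

variable (G : Type*) {X ι : Type*} [Group G] [MulAction G X] [LinearOrder ι]

def fundamentalDomainOfCover (U : ι → Set X) : Set X :=
  ⋃ i, (U i \ ⋃ j < i, ⋃ g : G, g • U j)

variable {G} {U : ι → Set X}

theorem fundamentalDomainOfCover_subset : fundamentalDomainOfCover G U ⊆ ⋃ i, U i :=
  iUnion_mono fun _ => sdiff_subset

theorem iUnion_smul_fundamentalDomainOfCover [WellFoundedLT ι]
    (hU : ∀ x : X, ∃ g : G, ∃ i, g • x ∈ U i) :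
    ⋃ g : G, g • fundamentalDomainOfCover G U = univ := by
  refine eq_univ_of_forall fun x => ?_
  obtain ⟨i, ⟨g, hgx⟩, hmin⟩ :=
    wellFounded_lt.has_min {i | ∃ g : G, g • x ∈ U i} (let ⟨g, i, h⟩ := hU x; ⟨i, g, h⟩)
  have hpiece : g • x ∈ U i \ ⋃ j < i, ⋃ h : G, h • U j := by
    refine ⟨hgx, fun hmem => ?_⟩
    simp only [mem_iUnion, mem_smul_set_iff_inv_smul_mem, smul_smul] at hmem
    obtain ⟨j, hji, h, hj⟩ := hmem
    exact hmin j ⟨_, hj⟩ hji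
  refine mem_iUnion.2 ⟨g⁻¹, ?_⟩
  rw [mem_smul_set_iff_inv_smul_mem, inv_inv]
  exact mem_iUnion.2 ⟨i, hpiece⟩

theorem disjoint_smul_fundamentalDomainOfCover
    (hU : ∀ i, ∀ g : G, g ≠ 1 → Disjoint (g • U i) (U i)) {g : G} (hg : g ≠ 1) :
    Disjoint (g • fundamentalDomainOfCover G U) (fundamentalDomainOfCover G U) := by
  rw [disjoint_left]
  rintro _ ⟨y, hy, rfl⟩ hgy
  obtain ⟨i, hyi, hyi'⟩ := mem_iUnion.1 hy
  obtain ⟨j, hgyj, hgyj'⟩ := mem_iUnion.1 hgy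
  rcases lt_trichotomy i j with hij | rfl | hji
  · exact hgyj' (mem_biUnion hij (mem_iUnion.2 ⟨g, smul_mem_smul_set hyi⟩))
  · exact disjoint_left.1 (hU i g hg) (smul_mem_smul_set hyi) hgyj
  · refine hyi' (mem_biUnion hji (mem_iUnion.2 ⟨g⁻¹, ?_⟩))
    rwa [mem_smul_set_iff_inv_smul_mem, inv_inv]

theorem isCompact_closure_fundamentalDomainOfCover [Finite ι] [TopologicalSpace X] [R1Space X]
    (hU : ∀ i, IsCompact (closure (U i))) : IsCompact (closure (fundamentalDomainOfCover G U)) :=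
  (isCompact_iUnion hU).closure_of_subset
    (fundamentalDomainOfCover_subset.trans (iUnion_mono fun _ => subset_closure))

variable [TopologicalSpace X] [ContinuousConstSMul G X]

theorem measurableSet_fundamentalDomainOfCover [Countable ι] [MeasurableSpace X]
    [OpensMeasurableSpace X] (hU : ∀ i, IsOpen (U i)) :
    MeasurableSet (fundamentalDomainOfCover G U) :=
  .iUnion fun i => (hU i).measurableSet.diff
    (isOpen_biUnion fun j _ => isOpen_iUnion fun g => (hU j).smul g).measurableSet

theorem frontier_fundamentalDomainOfCover_subset [Finite ι]
    (hU : ∀ i, LocallyFinite fun g : G => g • U i) :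
    frontier (fundamentalDomainOfCover G U) ⊆ ⋃ g : G, g • ⋃ i, frontier (U i) := by
  set S := ⋃ g : G, g • ⋃ i, frontier (U i)
  have hU_S : ∀ i, frontier (U i) ⊆ S := fun i z hz =>
    mem_iUnion.2 ⟨1, by rw [one_smul]; exact mem_iUnion.2 ⟨i, hz⟩⟩
  have horbit_S : ∀ j, frontier (⋃ g : G, g • U j) ⊆ S := fun j =>
    (frontier_iUnion_smul_subset (hU j)).trans
      (iUnion_mono fun g => smul_set_mono (subset_iUnion (fun i => frontier (U i)) j))
  have hprev_S : ∀ i, frontier (⋃ j < i, ⋃ g : G, g • U j) ⊆ S := fun i => by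
    rw [show (⋃ j < i, ⋃ g : G, g • U j) = ⋃ j : Iio i, ⋃ g : G, g • U j from
      biUnion_eq_iUnion _ _]
    exact (locallyFinite_of_finite _).frontier_iUnion_subset.trans
      (iUnion_subset fun j => horbit_S j)
  refine ((locallyFinite_of_finite _).frontier_iUnion_subset).trans (iUnion_subset fun i => ?_)
  exact (frontier_diff_subset _ _).trans (union_subset (hU_S i) (hprev_S i))

theorem measure_frontier_fundamentalDomainOfCover_eq_zero [Finite ι]
    [ProperlyDiscontinuousSMul G X] [LocallyCompactSpace X] [R1Space X] [MeasurableSpace X]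
    {μ : Measure X} (hnull : ∀ (g : G) (N : Set X), μ N = 0 → μ (g • N) = 0)
    (hU_cpt : ∀ i, IsCompact (closure (U i))) (hU_null : ∀ i, μ (frontier (U i)) = 0) :
    μ (frontier (fundamentalDomainOfCover G U)) = 0 := by
  have hN : IsCompact (closure (⋃ i, frontier (U i))) :=
    (isCompact_iUnion hU_cpt).closure_of_subset (iUnion_mono fun _ => frontier_subset_closure)
  refine measure_mono_null (subset_inter (frontier_fundamentalDomainOfCover_subset fun i =>
      locallyFinite_smul_of_isCompact_closure (hU_cpt i)) frontier_subset_closure) ?_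
  exact measure_iUnion_smul_inter_eq_zero hnull (locallyFinite_smul_of_isCompact_closure hN)
    (measure_iUnion_null hU_null) (isCompact_closure_fundamentalDomainOfCover hU_cpt)

end FundamentalDomain

theorem exists_strict_fundamental_domain_of_free_general
    {X : Type*} [MetricSpace X] [LocallyCompactSpace X]
    [MeasurableSpace X] [BorelSpace X]
    (μ : Measure X) [SigmaFinite μ]
    {G : Type*} [Group G] [MulAction G X]
    (hcont : ∀ g : G, Continuous fun x : X => g • x)
    (hnull : ∀ (g : G) (N : Set X), μ N = 0 → μ (g • N) = 0)
    (hPD : ProperlyDisc G X)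
    (hfree : ∀ (g : G) (x : X), g • x = x → g = 1)
    (K : Set X) (hK : IsCompact K) (hKX : (⋃ g : G, g • K) = Set.univ) :
    ∃ B : Set X, MeasurableSet B ∧ IsCompact (closure B) ∧
      μ (frontier B) = 0 ∧
      (⋃ g : G, g • B) = Set.univ ∧
      ∀ g : G, g ≠ 1 → (g • B) ∩ B = ∅ := by
  have : ContinuousConstSMul G X := ⟨hcont⟩
  have := hPD.properlyDiscontinuousSMul
  have hloc : ∀ x : X, ∃ U, IsOpen U ∧ x ∈ U ∧ IsCompact (closure U) ∧ μ (frontier U) = 0 ∧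
      ∀ g : G, g ≠ 1 → Disjoint (g • U) U := fun x => by
    obtain ⟨V, hV, hV_disj⟩ := ProperlyDiscontinuousSMul.exists_nhds_disjoint_image G x
    obtain ⟨U, hUV, hU⟩ := exists_isOpen_subset_isCompact_closure_null_frontier μ hV
    refine ⟨U, hU.1, hU.2.1, hU.2.2.1, hU.2.2.2, fun g hg => ?_⟩
    exact (hV_disj g fun h => hg (hfree g x h)).mono (smul_set_mono hUV) hUV
  choose U hU_open hxU hU_cpt hU_null hU_disj using hloc
  obtain ⟨t, ht⟩ := hK.elim_finite_subcover U hU_open fun x _ => mem_iUnion.2 ⟨x, hxU x⟩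
  -- Reindexing by `Fin` fixes the order in which the pieces of `B` are carved out.
  let V : Fin t.card → Set X := fun i => U (t.equivFin.symm i)
  have hV_cover : ∀ x : X, ∃ g : G, ∃ i, g • x ∈ V i := fun x => by
    obtain ⟨g, hg⟩ := mem_iUnion.1 (hKX.symm ▸ mem_univ x : x ∈ ⋃ g : G, g • K)
    obtain ⟨y, hy, hxy⟩ := mem_iUnion₂.1 (ht (mem_smul_set_iff_inv_smul_mem.1 hg))
    exact ⟨g⁻¹, t.equivFin ⟨y, hy⟩, by simpa [V] using hxy⟩
  exact ⟨fundamentalDomainOfCover G V,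
    measurableSet_fundamentalDomainOfCover fun i => hU_open _,
    isCompact_closure_fundamentalDomainOfCover fun i => hU_cpt _,
    measure_frontier_fundamentalDomainOfCover_eq_zero hnull (fun i => hU_cpt _) fun i => hU_null _,
    iUnion_smul_fundamentalDomainOfCover hV_cover,
    fun g hg => disjoint_iff_inter_eq_empty.1
      (disjoint_smul_fundamentalDomainOfCover (fun i => hU_disj _) hg)⟩

/-- **Lemma A.1 (free case).** If moreover the action of `G` on `X` is free, the
fundamental domain `B` can be chosen so that `GB = X` and `gB ∩ B = ∅` for all
`g ≠ 1`. -/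
theorem exists_strict_fundamental_domain_of_free
    {X : Type*} [MetricSpace X] [CompleteSpace X] [LocallyCompactSpace X]
    [MeasurableSpace X] [BorelSpace X]
    (μ : Measure X) [SigmaFinite μ] [μ.Regular]
    {G : Type*} [Group G] [TopologicalSpace G] [IsTopologicalGroup G] [MulAction G X]
    (hcont : ∀ g : G, Continuous fun x : X => g • x)
    (hnull : ∀ (g : G) (N : Set X), μ N = 0 → μ (g • N) = 0)
    (hPD : ProperlyDisc G X)
    (hfree : ∀ (g : G) (x : X), g • x = x → g = 1)
    (K : Set X) (hK : IsCompact K) (hKX : (⋃ g : G, g • K) = Set.univ) :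
    ∃ B : Set X, MeasurableSet B ∧ IsCompact (closure B) ∧
      μ (frontier B) = 0 ∧
      (⋃ g : G, g • B) = Set.univ ∧
      ∀ g : G, g ≠ 1 → (g • B) ∩ B = ∅ :=
  exists_strict_fundamental_domain_of_free_general μ hcont hnull hPD hfree K hK hKX
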